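/- arXiv:2603.27962 — 4 statements merged into one kernel-verified Lean document; each statement's English description precedes it below -/
import Mathlib

section
/- In the setting of the previous statement, with Σ positive definite, a_i > 1, θ* = z̄ and θ′* = ((a_i−1)/(a_i+N−1)) z_i + (N/(a_i+N−1)) z̄: the manipulating agent's quadratic cost satisfies (θ′*−z_i)ᵀΣ(θ′*−z_i) = (N/(a_i+N−1))²·(z̄−z_i)ᵀΣ(z̄−z_i) < (z̄−z_i)ᵀΣ(z̄−z_i) when z̄ ≠ z_i, while the global cost increases: F(θ′*) = F(θ*) + ((a_i−1)/(a_i+N−1))²·(z_i−z̄)ᵀΣ(z_i−z̄). -/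
open scoped InnerProductSpace

theorem stmt12 (n N : ℕ) (hN : 2 ≤ N) (z : Fin N → EuclideanSpace ℝ (Fin n))
    (A : EuclideanSpace ℝ (Fin n) →ₗ[ℝ] EuclideanSpace ℝ (Fin n))
    (hsym : ∀ x y, ⟪A x, y⟫_ℝ = ⟪x, A y⟫_ℝ)
    (hpos : ∀ x, x ≠ 0 → 0 < ⟪A x, x⟫_ℝ)
    (i : Fin N) (a : ℝ) (ha : 1 < a)
    (zbar θ' : EuclideanSpace ℝ (Fin n))
    (hzbar : zbar = (1 / (N : ℝ)) • ∑ j, z j)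
    (hθ' : θ' = ((a - 1) / (a + N - 1)) • z i + ((N : ℝ) / (a + N - 1)) • zbar)
    (F : EuclideanSpace ℝ (Fin n) → ℝ)
    (hF : F = fun θ => (1 / (N : ℝ)) * ∑ j, ⟪A (θ - z j), θ - z j⟫_ℝ) :
    (⟪A (θ' - z i), θ' - z i⟫_ℝ =
        ((N : ℝ) / (a + N - 1)) ^ 2 * ⟪A (zbar - z i), zbar - z i⟫_ℝ) ∧
    (zbar ≠ z i →
        ⟪A (θ' - z i), θ' - z i⟫_ℝ < ⟪A (zbar - z i), zbar - z i⟫_ℝ) ∧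
    F θ' = F zbar + ((a - 1) / (a + N - 1)) ^ 2 * ⟪A (z i - zbar), z i - zbar⟫_ℝ := by
  have hN2 : (2:ℝ) ≤ (N:ℝ) := by exact_mod_cast hN
  have hNpos : (0:ℝ) < N := by linarith
  have hNne : (N:ℝ) ≠ 0 := ne_of_gt hNpos
  have hden : (0:ℝ) < a + N - 1 := by linarith
  have hdne : a + (N:ℝ) - 1 ≠ 0 := ne_of_gt hden
  have hscale : ∀ (t : ℝ) (v : EuclideanSpace ℝ (Fin n)),
      ⟪A (t • v), t • v⟫_ℝ = t ^ 2 * ⟪A v, v⟫_ℝ := by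
    intro t v
    rw [map_smul, real_inner_smul_left, real_inner_smul_right]
    ring
  have hdiff : θ' - z i = ((N : ℝ) / (a + N - 1)) • (zbar - z i) := by
    rw [hθ']
    match_scalars <;> (field_simp; try ring)
  have h1 : ⟪A (θ' - z i), θ' - z i⟫_ℝ =
      ((N : ℝ) / (a + N - 1)) ^ 2 * ⟪A (zbar - z i), zbar - z i⟫_ℝ := by
    rw [hdiff, hscale]
  refine ⟨h1, ?_, ?_⟩
  · intro hne
    have hin := hpos (zbar - z i) (sub_ne_zero.mpr hne)
    have hc1 : (N : ℝ) / (a + N - 1) < 1 := by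
      rw [div_lt_one hden]; linarith
    have hc0 : (0:ℝ) < (N : ℝ) / (a + N - 1) := by positivity
    have hcsq : ((N : ℝ) / (a + N - 1)) ^ 2 < 1 := by nlinarith
    rw [h1]
    calc ((N : ℝ) / (a + N - 1)) ^ 2 * ⟪A (zbar - z i), zbar - z i⟫_ℝ
        < 1 * ⟪A (zbar - z i), zbar - z i⟫_ℝ := by
          exact mul_lt_mul_of_pos_right hcsq hin
      _ = ⟪A (zbar - z i), zbar - z i⟫_ℝ := one_mul _
  · have hsum0 : ∑ j, (zbar - z j) = 0 := by
      rw [Finset.sum_sub_distrib, Finset.sum_const, hzbar, Finset.card_univ,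
        Fintype.card_fin]
      rw [← Nat.cast_smul_eq_nsmul ℝ, smul_smul]
      have h : (N:ℝ) * (1 / N) = 1 := by field_simp
      rw [h, one_smul, sub_self]
    have hexp : ∀ θ : EuclideanSpace ℝ (Fin n),
        F θ = F zbar + ⟪A (θ - zbar), θ - zbar⟫_ℝ := by
      intro θ
      rw [hF]
      simp only
      have hrw : ∀ j : Fin N, ⟪A (θ - z j), θ - z j⟫_ℝ =
          ⟪A (θ - zbar), θ - zbar⟫_ℝ + 2 * ⟪A (θ - zbar), zbar - z j⟫_ℝ
            + ⟪A (zbar - z j), zbar - z j⟫_ℝ := by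
        intro j
        have : θ - z j = (θ - zbar) + (zbar - z j) := by abel
        rw [this, map_add, inner_add_left, inner_add_right, inner_add_right]
        have := hsym (θ - zbar) (zbar - z j)
        have h2 : ⟪A (zbar - z j), θ - zbar⟫_ℝ = ⟪A (θ - zbar), zbar - z j⟫_ℝ := by
          rw [hsym, real_inner_comm]
        rw [h2]; ring
      rw [Finset.sum_congr rfl (fun j _ => hrw j)]
      rw [Finset.sum_add_distrib, Finset.sum_add_distrib, Finset.sum_const,
        Finset.card_univ, Fintype.card_fin]
      have hcross : ∑ j, 2 * ⟪A (θ - zbar), zbar - z j⟫_ℝ = 0 := by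
        rw [← Finset.mul_sum, ← inner_sum, hsum0, inner_zero_right, mul_zero]
      rw [hcross]
      have : (fun x => zbar - z x) = fun j => zbar - z j := rfl
      simp only [sub_self, map_zero, inner_zero_left, zero_add, add_zero]
      rw [nsmul_eq_mul]
      field_simp
      ring
    have hdiff2 : θ' - zbar = ((a - 1) / (a + N - 1)) • (z i - zbar) := by
      rw [hθ']
      match_scalars <;> (field_simp; try ring)
    rw [hexp θ', hdiff2, hscale]
end

section
/- Let μ₁,…,μ_N ∈ ℝⁿ with mean μ, and a_i > 1. Define μ̂_i = (a_i μ_i + ∑_{j≠i} μ_j)/(a_i + N − 1). Then ‖μ̂_i − μ_i‖ = (N/(a_i+N−1))·‖μ − μ_i‖, and (1/N)∑_{j=1}^N ‖μ̂_i − μ_j‖² = (1/N)∑_{j=1}^N ‖μ − μ_j‖² + ((a_i−1)/(a_i+N−1))²·‖μ − μ_i‖². -/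
theorem stmt13 (n N : ℕ) (hN : 2 ≤ N) (μ : Fin N → EuclideanSpace ℝ (Fin n))
    (i : Fin N) (a : ℝ) (ha : 1 < a)
    (μbar μhat : EuclideanSpace ℝ (Fin n))
    (hμbar : μbar = (1 / (N : ℝ)) • ∑ j, μ j)
    (hμhat : μhat = (1 / (a + (N : ℝ) - 1)) •
        (a • μ i + ∑ j ∈ Finset.univ.erase i, μ j)) :
    ‖μhat - μ i‖ = ((N : ℝ) / (a + N - 1)) * ‖μbar - μ i‖ ∧
    (1 / (N : ℝ)) * ∑ j, ‖μhat - μ j‖ ^ 2 =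
      (1 / (N : ℝ)) * ∑ j, ‖μbar - μ j‖ ^ 2 +
        ((a - 1) / (a + N - 1)) ^ 2 * ‖μbar - μ i‖ ^ 2 := by
  have hN2 : (2:ℝ) ≤ (N:ℝ) := by exact_mod_cast hN
  have hNne : (N:ℝ) ≠ 0 := by linarith
  have hd : (0:ℝ) < a + (N:ℝ) - 1 := by linarith
  have hdne : a + (N:ℝ) - 1 ≠ 0 := ne_of_gt hd
  have herase : ∑ j ∈ Finset.univ.erase i, μ j = (∑ j, μ j) - μ i :=
    Finset.sum_erase_eq_sub (Finset.mem_univ i)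
  set c : ℝ := (a - 1) / (a + (N:ℝ) - 1) with hc
  set v := μbar - μ i with hv
  have h1 : μhat - μ i = ((N:ℝ)/(a + (N:ℝ) - 1)) • (μbar - μ i) := by
    rw [hμhat, herase, hμbar]
    match_scalars <;> field_simp <;> ring
  have hkey : ∀ j, μhat - μ j = (μbar - μ j) - c • v := by
    intro j
    rw [hμhat, herase, hv, hμbar, hc]
    match_scalars <;> field_simp <;> ring
  constructor
  · rw [h1, norm_smul, Real.norm_eq_abs, abs_of_nonneg (by positivity)]
  · have hsum0 : ∑ j, (μbar - μ j) = 0 := by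
      rw [Finset.sum_sub_distrib, Finset.sum_const, hμbar, Finset.card_univ,
        Fintype.card_fin, ← Nat.cast_smul_eq_nsmul ℝ, smul_smul]
      field_simp
      rw [one_smul, sub_self]
    have hterm : ∀ j, ‖μhat - μ j‖^2
        = ‖μbar - μ j‖^2 - 2 * c * inner ℝ (μbar - μ j) v + c^2 * ‖v‖^2 := by
      intro j
      rw [hkey j, norm_sub_sq_real, real_inner_smul_right, norm_smul]
      simp only [Real.norm_eq_abs, mul_pow, sq_abs]
      ring
    rw [Finset.sum_congr rfl (fun j _ => hterm j), Finset.sum_add_distrib,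
      Finset.sum_sub_distrib]
    have hcross : ∑ j, (2 * c * inner ℝ (μbar - μ j) v : ℝ) = 0 := by
      rw [← Finset.mul_sum, ← sum_inner, hsum0]
      simp
    rw [hcross, Finset.sum_const, Finset.card_univ, Fintype.card_fin,
      nsmul_eq_mul]
    field_simp
    ring
end

section
/- Let λ_t = λ₀/(t+1)^v with λ₀ ∈ (0,1/2) and v ∈ (0,1), and let x_t be a nonnegative sequence satisfying x_{t+1} ≤ (1−2λ_t)² x_t + 4λ_t²σ²/N for all t. Then x_t ≤ c₁λ_t for all t, where c₁ = (1/λ₀)·max{ x₀, 4λ₀²σ²/(N(2λ₀ − v)) }, provided 2λ₀ > v. -/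
set_option maxHeartbeats 1000000


theorem stmt14 (x : ℕ → ℝ) (lam₀ v σ N : ℝ)
    (hlam0 : 0 < lam₀) (hlam1 : lam₀ < 1 / 2) (hv0 : 0 < v) (hv1 : v < 1)
    (hN : 0 < N) (hcond : v < 2 * lam₀)
    (hx : ∀ t, 0 ≤ x t)
    (hrec : ∀ t : ℕ, x (t + 1) ≤
      (1 - 2 * (lam₀ / ((t : ℝ) + 1) ^ v)) ^ 2 * x t +
        4 * (lam₀ / ((t : ℝ) + 1) ^ v) ^ 2 * σ ^ 2 / N) :
    ∀ t : ℕ, x t ≤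
      (1 / lam₀) * max (x 0) (4 * lam₀ ^ 2 * σ ^ 2 / (N * (2 * lam₀ - v))) *
        (lam₀ / ((t : ℝ) + 1) ^ v) := by
  set M : ℝ := max (x 0) (4 * lam₀ ^ 2 * σ ^ 2 / (N * (2 * lam₀ - v))) with hMdef
  have hMx : x 0 ≤ M := le_max_left _ _
  have hMσ : 4 * lam₀ ^ 2 * σ ^ 2 / (N * (2 * lam₀ - v)) ≤ M := le_max_right _ _
  have hM0 : (0:ℝ) ≤ M := le_trans (hx 0) hMx
  have hvl : (0:ℝ) < 2 * lam₀ - v := by linarith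
  have hσ : 4 * lam₀ ^ 2 * σ ^ 2 ≤ M * (N * (2 * lam₀ - v)) := by
    rw [div_le_iff₀ (by positivity)] at hMσ; linarith
  intro t
  induction t with
  | zero =>
    simp only [Nat.cast_zero, zero_add, Real.one_rpow, div_one]
    calc x 0 ≤ M := hMx
      _ = 1 / lam₀ * M * lam₀ := by field_simp
  | succ t ih =>
    set a : ℝ := ((t : ℝ) + 1) ^ v with hadef
    have ht1 : (0:ℝ) < (t : ℝ) + 1 := by positivity
    have ha0 : 0 < a := Real.rpow_pos_of_pos ht1 v
    have ha1 : (1:ℝ) ≤ a := Real.one_le_rpow (by linarith) (le_of_lt hv0)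
    have ha2 : a ≤ (t : ℝ) + 1 := by
      calc a ≤ ((t : ℝ) + 1) ^ (1:ℝ) :=
            Real.rpow_le_rpow_of_exponent_le (by linarith) (le_of_lt hv1)
        _ = (t : ℝ) + 1 := Real.rpow_one _
    set b : ℝ := ((t : ℝ) + 2) ^ v with hbdef
    have hb0 : 0 < b := Real.rpow_pos_of_pos (by linarith) v
    have hb : b ≤ a * (1 + v / ((t : ℝ) + 1)) := by
      have he : (t : ℝ) + 2 = ((t : ℝ) + 1) * (1 + 1 / ((t : ℝ) + 1)) := by
        field_simp; ring
      have hmul : b = a * (1 + 1 / ((t : ℝ) + 1)) ^ v := by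
        rw [hbdef, he, Real.mul_rpow (by linarith) (by positivity)]
      have hs : (-1:ℝ) ≤ 1 / ((t : ℝ) + 1) := by
        have h : (0:ℝ) ≤ 1 / ((t : ℝ) + 1) := by positivity
        linarith
      have hbern : (1 + 1 / ((t : ℝ) + 1)) ^ v ≤ 1 + v * (1 / ((t : ℝ) + 1)) :=
        rpow_one_add_le_one_add_mul_self hs (le_of_lt hv0) (le_of_lt hv1)
      rw [hmul]
      have : 1 + v * (1 / ((t : ℝ) + 1)) = 1 + v / ((t : ℝ) + 1) := by ring
      rw [this] at hbern
      exact mul_le_mul_of_nonneg_left hbern (le_of_lt ha0)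
    have hcast : (((t + 1 : ℕ) : ℝ) + 1) = (t : ℝ) + 2 := by push_cast; ring
    have ih' : x t ≤ M / a := by
      refine le_trans ih (le_of_eq ?_)
      field_simp
    have hlamle : lam₀ / a ≤ lam₀ := by
      calc lam₀ / a ≤ lam₀ / 1 := by
            apply div_le_div_of_nonneg_left (le_of_lt hlam0) (by linarith) ha1
        _ = lam₀ := div_one _
    have hc0 : 0 ≤ 1 - 2 * (lam₀ / a) := by linarith
    have hMa : 0 ≤ M / a := div_nonneg hM0 (le_of_lt ha0)
    have h1 : (1 - 2 * (lam₀ / a)) ^ 2 * (M / a) ≤ (1 - 2 * (lam₀ / a)) * (M / a) := by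
      have hcp : 0 ≤ 2 * (lam₀ / a) := by positivity
      nlinarith [mul_nonneg (mul_nonneg hcp hc0) hMa]
    have h2eq : 4 * (lam₀ / a) ^ 2 * σ ^ 2 / N = 4 * lam₀ ^ 2 * σ ^ 2 / (N * a ^ 2) := by
      field_simp
      try ring
      try tauto
    have h2 : 4 * (lam₀ / a) ^ 2 * σ ^ 2 / N ≤ M * (2 * lam₀ - v) / a ^ 2 := by
      rw [h2eq, div_le_div_iff₀ (by positivity) (by positivity)]
      nlinarith [mul_le_mul_of_nonneg_right hσ (sq_nonneg a)]
    have hmid : (1 - 2 * (lam₀ / a)) * (M / a) + M * (2 * lam₀ - v) / a ^ 2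
        = M * (a - v) / a ^ 2 := by
      field_simp; ring
    have hfin : M * (a - v) / a ^ 2 ≤ M / b := by
      rw [div_le_div_iff₀ (by positivity) hb0]
      have hkey : (a - v) * b ≤ a ^ 2 := by
        have hav : 0 ≤ a - v := by linarith
        have step1 : (a - v) * b ≤ (a - v) * (a * (1 + v / ((t : ℝ) + 1))) :=
          mul_le_mul_of_nonneg_left hb hav
        have hau : a * (v / ((t : ℝ) + 1)) ≤ v := by
          rw [mul_div_assoc', div_le_iff₀ ht1]
          nlinarith [ha2, hv0.le]
        have step2 : (a - v) * (a * (1 + v / ((t : ℝ) + 1))) ≤ a ^ 2 := by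
          have hu0 : 0 ≤ v / ((t : ℝ) + 1) := by positivity
          nlinarith [mul_le_mul_of_nonneg_left hau ha0.le,
            mul_nonneg hv0.le (mul_nonneg ha0.le hu0)]
        exact le_trans step1 step2
      nlinarith [mul_le_mul_of_nonneg_left hkey hM0]
    have hgoal_eq : (1 / lam₀) * M * (lam₀ / b) = M / b := by field_simp
    rw [hcast, ← hbdef, hgoal_eq]
    calc x (t + 1) ≤ (1 - 2 * (lam₀ / a)) ^ 2 * x t + 4 * (lam₀ / a) ^ 2 * σ ^ 2 / N :=
          hrec t
      _ ≤ (1 - 2 * (lam₀ / a)) ^ 2 * (M / a) + 4 * (lam₀ / a) ^ 2 * σ ^ 2 / N := by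
          exact add_le_add_left (mul_le_mul_of_nonneg_left ih' (sq_nonneg _)) _
      _ ≤ (1 - 2 * (lam₀ / a)) * (M / a) + M * (2 * lam₀ - v) / a ^ 2 := add_le_add h1 h2
      _ = M * (a - v) / a ^ 2 := hmid
      _ ≤ M / b := hfin
end

section
/- Let λ_t = λ₀/(t+1)^v with λ₀ ∈ (0,1/4), v ∈ (0,1), and let x_t ≥ 0 satisfy x_{t+1} ≥ (1−4λ_t)x_t + (4σ²/N)λ_t² for all t. Then x_t ≥ min{x₀, σ²/(Nλ₀⁻¹)}·λ_t/λ₀ for all t. -/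
theorem stmt15 (x : ℕ → ℝ) (lam₀ v σ N : ℝ)
    (hlam0 : 0 < lam₀) (hlam1 : lam₀ < 1 / 4) (hv0 : 0 < v) (hv1 : v < 1)
    (hN : 0 < N)
    (hx : ∀ t, 0 ≤ x t)
    (hrec : ∀ t : ℕ, x (t + 1) ≥
      (1 - 4 * (lam₀ / ((t : ℝ) + 1) ^ v)) * x t +
        (4 * σ ^ 2 / N) * (lam₀ / ((t : ℝ) + 1) ^ v) ^ 2) :
    ∀ t : ℕ, x t ≥
      min (x 0) (σ ^ 2 * lam₀ / N) * ((lam₀ / ((t : ℝ) + 1) ^ v) / lam₀) := by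
  set m := min (x 0) (σ ^ 2 * lam₀ / N) with hm
  have hm0 : 0 ≤ m := le_min (hx 0) (by positivity)
  have hmσ : m ≤ σ ^ 2 * lam₀ / N := min_le_right _ _
  have hsimp : ∀ p : ℝ, lam₀ / p / lam₀ = 1 / p := fun p => by
    rw [div_right_comm, div_self hlam0.ne']
  intro t
  induction t with
  | zero =>
    simp only [Nat.cast_zero, zero_add, Real.one_rpow, div_one, div_self hlam0.ne', mul_one]
    exact min_le_left _ _
  | succ t ih =>
    have hc : (0:ℝ) ≤ (t:ℝ) := Nat.cast_nonneg t
    have hp1 : (1:ℝ) ≤ ((t:ℝ)+1) ^ v := Real.one_le_rpow (by linarith) hv0.le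
    have hApos : (0:ℝ) < ((t:ℝ)+1) ^ v := by linarith
    have hp2 : (1:ℝ) ≤ ((t:ℝ)+2) ^ v := Real.one_le_rpow (by linarith) hv0.le
    have hBpos : (0:ℝ) < ((t:ℝ)+2) ^ v := by linarith
    have hAB : ((t:ℝ)+1) ^ v ≤ ((t:ℝ)+2) ^ v :=
      Real.rpow_le_rpow (by linarith) (by linarith) hv0.le
    set A := ((t:ℝ)+1) ^ v
    set B := ((t:ℝ)+2) ^ v
    have ha_le : lam₀ / A ≤ lam₀ := by
      rw [div_le_iff₀ hApos]; nlinarith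
    have h1 : 0 ≤ 1 - 4 * (lam₀ / A) := by linarith
    have ih' : x t ≥ m * (1 / A) := by
      have := ih
      rwa [hsimp] at this
    have hcoef : 4 * m / lam₀ ≤ 4 * σ ^ 2 / N := by
      rw [div_le_div_iff₀ hlam0 hN]
      have hmn : m * N ≤ σ ^ 2 * lam₀ := (le_div_iff₀ hN).mp hmσ
      nlinarith
    have step1 : (4 * σ ^ 2 / N) * (lam₀ / A) ^ 2 ≥ (4 * m / lam₀) * (lam₀ / A) ^ 2 := by
      apply mul_le_mul_of_nonneg_right hcoef (by positivity)
    have step2 : (1 - 4 * (lam₀ / A)) * x t ≥ (1 - 4 * (lam₀ / A)) * (m * (1 / A)) :=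
      mul_le_mul_of_nonneg_left ih' h1
    have hiden : (1 - 4 * (lam₀ / A)) * (m * (1 / A)) + (4 * m / lam₀) * (lam₀ / A) ^ 2
        = m * (1 / A) := by
      field_simp
      ring
    have hmono : m * (1 / B) ≤ m * (1 / A) := by
      apply mul_le_mul_of_nonneg_left _ hm0
      apply one_div_le_one_div_of_le hApos hAB
    have hgoal : x (t + 1) ≥ m * (1 / B) := by
      have h := hrec t
      nlinarith [step1, step2, hiden, hmono]
    have : ((t + 1 : ℕ) : ℝ) + 1 = (t:ℝ) + 2 := by push_cast; ring
    rw [this, hsimp]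
    exact hgoal
end
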